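/- Let f : ℝ → ℝ be nonnegative, bounded, and measurable, let γ > 0, and let x₀ < x₁ be real numbers such that f(x) ≤ γ for all x < x₁. Then for every t > 0: ∫₀ᵗ ∫ℝ f(x) (4πs)^{−1/2} e^{−(x−x₀)²/(4s)} dx ds ≤ γ t + (t/2) · ‖f‖_∞ · (2/√π) ∫_{(x₁−x₀)/(2√t)}^{∞} e^{−r²} dr. -/

import Mathlib

open MeasureTheory Real ProbabilityTheory Set
open scoped NNReal

/-!
For fixed `s > 0` the heat kernel is the density of the Gaussian `N(x₀, 2s)`, so the inner
integral is `∫ f dN(x₀, 2s)`. Splitting at `x₁`, the part to the left is at most `γ` (the measure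
is a probability), and the part to the right is at most `‖f‖_∞` times the Gaussian tail
`N(x₀, 2s)[x₁, ∞) = π^{-1/2} ∫_{(x₁-x₀)/(2√s)}^∞ e^{-r²} dr`, which increases with `s` because
`x₁ ≥ x₀`. The inner integral is thus bounded uniformly on `(0, t]` by its value at `s = t`,
and integrating over `s` gives the estimate.
-/

lemma integral_le_add_mul_measureReal {α : Type*} [MeasurableSpace α] {μ : Measure α}
    [IsProbabilityMeasure μ] {f : α → ℝ} (hf : Integrable f μ) {S : Set α} (hS : MeasurableSet S)
    {γ M : ℝ} (hγ : 0 ≤ γ) (hfγ : ∀ x ∉ S, f x ≤ γ) (hfM : ∀ x ∈ S, f x ≤ M) :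
    ∫ x, f x ∂μ ≤ γ + M * μ.real S := by
  have hS_le : ∫ x in S, f x ∂μ ≤ M * μ.real S := by
    simpa [mul_comm] using setIntegral_mono_on hf.integrableOn (integrableOn_const ..) hS hfM
  have hSc_le : ∫ x in Sᶜ, f x ∂μ ≤ γ := calc
    ∫ x in Sᶜ, f x ∂μ ≤ ∫ _ in Sᶜ, γ ∂μ :=
      setIntegral_mono_on hf.integrableOn (integrableOn_const ..) hS.compl hfγ
    _ = μ.real Sᶜ * γ := by rw [setIntegral_const, smul_eq_mul]
    _ ≤ γ := mul_le_of_le_one_left hγ measureReal_le_one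
  rw [← integral_add_compl hS hf]
  linarith

lemma heatKernel_eq_gaussianPDFReal (x₀ x : ℝ) {s : ℝ} (hs : 0 < s) :
    (4 * π * s) ^ (-(1 : ℝ) / 2) * exp (-(x - x₀) ^ 2 / (4 * s))
      = gaussianPDFReal x₀ (2 * s).toNNReal x := by
  rw [gaussianPDFReal, Real.coe_toNNReal _ (by positivity), ← Real.sqrt_inv, Real.sqrt_eq_rpow,
    ← Real.rpow_neg_one, ← Real.rpow_mul (by positivity)]
  ring_nf

lemma integral_mul_heatKernel_eq_integral_gaussianReal (f : ℝ → ℝ) (x₀ : ℝ) {s : ℝ}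
    (hs : 0 < s) :
    ∫ x, f x * ((4 * π * s) ^ (-(1 : ℝ) / 2) * exp (-(x - x₀) ^ 2 / (4 * s)))
      = ∫ x, f x ∂gaussianReal x₀ (2 * s).toNNReal := by
  have hv : (2 * s).toNNReal ≠ 0 := by simpa using hs
  simp_rw [integral_gaussianReal_eq_integral_smul hv, heatKernel_eq_gaussianPDFReal x₀ _ hs,
    smul_eq_mul, mul_comm]

lemma gaussianReal_half_real_Ici (z : ℝ) :
    (gaussianReal 0 (1 / 2)).real (Ici z) = (√π)⁻¹ * ∫ r in Ioi z, exp (-r ^ 2) := by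
  have hnonneg : 0 ≤ ∫ r in Ici z, gaussianPDFReal 0 (1 / 2) r :=
    setIntegral_nonneg measurableSet_Ici fun _ _ => gaussianPDFReal_nonneg ..
  rw [measureReal_def, gaussianReal_apply_eq_integral _ (by norm_num),
    ENNReal.toReal_ofReal hnonneg, integral_Ici_eq_integral_Ioi, ← integral_const_mul]
  congr 1 with r
  simp only [gaussianPDFReal]
  norm_num
  field_simp

lemma gaussianReal_map_standardize (μ : ℝ) {v : ℝ≥0} (hv : v ≠ 0) :
    (gaussianReal μ v).map (fun x => (x - μ) / √(2 * v)) = gaussianReal 0 (1 / 2) := by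
  have hc : (0 : ℝ) < √(2 * v) := by positivity
  rw [show (fun x => (x - μ) / √(2 * v)) = (· / √(2 * v)) ∘ (· - μ) from rfl,
    ← Measure.map_map (by fun_prop) (by fun_prop), gaussianReal_map_sub_const,
    gaussianReal_map_div_const, sub_self, zero_div]
  congr 1
  ext
  simp only [NNReal.coe_div, NNReal.coe_mk, Real.sq_sqrt (by positivity : (0 : ℝ) ≤ 2 * v)]
  field_simp
  norm_num

lemma gaussianReal_real_Ici (μ a : ℝ) {v : ℝ≥0} (hv : v ≠ 0) :
    (gaussianReal μ v).real (Ici a) = (√π)⁻¹ * ∫ r in Ioi ((a - μ) / √(2 * v)), exp (-r ^ 2) := by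
  have hc : (0 : ℝ) < √(2 * v) := by positivity
  have hpre : (fun x => (x - μ) / √(2 * v)) ⁻¹' Ici ((a - μ) / √(2 * v)) = Ici a := by
    ext x
    rw [mem_preimage, mem_Ici, mem_Ici, div_le_div_iff_of_pos_right hc, sub_le_sub_iff_right]
  rw [← gaussianReal_half_real_Ici, ← gaussianReal_map_standardize μ hv,
    map_measureReal_apply (by fun_prop) measurableSet_Ici, hpre]

lemma gaussianReal_real_Ici_le_of_le {μ a : ℝ} (ha : μ ≤ a) {v w : ℝ≥0} (hv : v ≠ 0)
    (hvw : v ≤ w) : (gaussianReal μ v).real (Ici a) ≤ (gaussianReal μ w).real (Ici a) := by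
  have hw : w ≠ 0 := (pos_iff_ne_zero.2 hv |>.trans_le hvw).ne'
  rw [gaussianReal_real_Ici μ a hv, gaussianReal_real_Ici μ a hw]
  have hz : (a - μ) / √(2 * w) ≤ (a - μ) / √(2 * v) :=
    div_le_div_of_nonneg_left (sub_nonneg.2 ha) (by positivity) (by gcongr)
  refine mul_le_mul_of_nonneg_left ?_ (by positivity)
  simpa using setIntegral_mono_set (integrable_exp_neg_mul_sq one_pos).integrableOn
    (ae_of_all _ fun _ => (exp_pos _).le) (Ioi_subset_Ioi hz).eventuallyLE

lemma integral_gaussianReal_le_of_le_on_Iio {f : ℝ → ℝ} (hf : Measurable f) {M γ : ℝ}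
    (hfM : ∀ x, |f x| ≤ M) (hγ : 0 ≤ γ) {μ a : ℝ} (ha : μ ≤ a) (hfγ : ∀ x < a, f x ≤ γ)
    {v w : ℝ≥0} (hv : v ≠ 0) (hvw : v ≤ w) :
    ∫ x, f x ∂gaussianReal μ v
      ≤ γ + M * ((√π)⁻¹ * ∫ r in Ioi ((a - μ) / √(2 * w)), exp (-r ^ 2)) := by
  have hw : w ≠ 0 := (pos_iff_ne_zero.2 hv |>.trans_le hvw).ne'
  have hM : 0 ≤ M := (abs_nonneg _).trans (hfM 0)
  calc ∫ x, f x ∂gaussianReal μ v ≤ γ + M * (gaussianReal μ v).real (Ici a) :=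
        integral_le_add_mul_measureReal (.of_bound hf.aestronglyMeasurable M (ae_of_all _ hfM))
          measurableSet_Ici hγ (fun x hx => hfγ x (not_le.1 hx))
          (fun x _ => (le_abs_self _).trans (hfM x))
    _ ≤ γ + M * (gaussianReal μ w).real (Ici a) := by
        gcongr
        exact gaussianReal_real_Ici_le_of_le ha hv hvw
    _ = _ := by rw [gaussianReal_real_Ici μ a hw]

lemma intervalIntegral.integral_le_mul_sub_of_nonneg_of_le {g : ℝ → ℝ} {a b C : ℝ} (hab : a ≤ b)
    (hg : ∀ s ∈ Ioc a b, 0 ≤ g s ∧ g s ≤ C) : ∫ s in a..b, g s ≤ C * (b - a) := calc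
  ∫ s in a..b, g s ≤ ‖∫ s in a..b, g s‖ := Real.le_norm_self _
  _ ≤ C * |b - a| := intervalIntegral.norm_integral_le_of_norm_le_const fun s hs => by
    rw [uIoc_of_le hab] at hs
    rw [Real.norm_of_nonneg (hg s hs).1]
    exact (hg s hs).2
  _ = C * (b - a) := by rw [abs_of_nonneg (sub_nonneg.2 hab)]

/-- Heat-kernel estimate: if `f ≥ 0` is bounded and measurable with `f ≤ γ` to the left
of `x₁`, then for every `t > 0`,
`∫₀ᵗ ∫ f(x) (4πs)^{−1/2} e^{−(x−x₀)²/(4s)} dx ds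
  ≤ γ t + (t/2) ‖f‖_∞ (2/√π) ∫_{(x₁−x₀)/(2√t)}^∞ e^{−r²} dr`. -/
theorem heat_kernel_tail_estimate
    (f : ℝ → ℝ) (hf_nonneg : ∀ x, 0 ≤ f x)
    (hf_bdd : ∃ M : ℝ, ∀ x, f x ≤ M)
    (hf_meas : Measurable f)
    (γ : ℝ) (hγ : 0 < γ)
    (x₀ x₁ : ℝ) (hx : x₀ < x₁)
    (hfγ : ∀ x : ℝ, x < x₁ → f x ≤ γ)
    (t : ℝ) (ht : 0 < t) :
    (∫ s in (0 : ℝ)..t, ∫ x : ℝ,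
        f x * ((4 * π * s) ^ (-(1 : ℝ) / 2) * Real.exp (-(x - x₀) ^ 2 / (4 * s))))
      ≤ γ * t + (t / 2) * (⨆ x : ℝ, |f x|) *
          ((2 / Real.sqrt π) *
            ∫ r in Set.Ioi ((x₁ - x₀) / (2 * Real.sqrt t)), Real.exp (-r ^ 2)) := by
  obtain ⟨M₀, hM₀⟩ := hf_bdd
  have hbdd : BddAbove (range fun x => |f x|) :=
    ⟨M₀, by rintro _ ⟨x, rfl⟩; simpa [abs_of_nonneg (hf_nonneg x)] using hM₀ x⟩
  have h2t : √(2 * ((2 * t).toNNReal : ℝ)) = 2 * √t := by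
    rw [Real.coe_toNNReal _ (by positivity), ← mul_assoc, Real.sqrt_mul (by norm_num)]
    norm_num
  calc _ ≤ (γ + (⨆ x, |f x|) * ((√π)⁻¹ * ∫ r in Ioi ((x₁ - x₀) / (2 * √t)), exp (-r ^ 2)))
          * (t - 0) := by
        refine intervalIntegral.integral_le_mul_sub_of_nonneg_of_le ht.le fun s ⟨hs, hst⟩ => ?_
        rw [integral_mul_heatKernel_eq_integral_gaussianReal f x₀ hs, ← h2t]
        exact ⟨integral_nonneg hf_nonneg, integral_gaussianReal_le_of_le_on_Iio hf_meas
          (le_ciSup hbdd) hγ.le hx.le hfγ (by simpa using hs) (by gcongr)⟩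
    _ = _ := by ring
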